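/- Semi-discrete optimal transportation optimality (Yau-type, quadratic cost): let μ be a finite Borel measure on ℝ^d with finite second moment, let p₁, …, pₙ ∈ ℝ^d be pairwise distinct, ν₁, …, νₙ > 0 with Σᵢνᵢ = μ(ℝ^d), and suppose h ∈ ℝⁿ satisfies μ(Vᵢ(h)) = νᵢ for all i, where Vᵢ(h) = {x : ∀ j, ⟪pᵢ, x⟫ + hᵢ ≥ ⟪pⱼ, x⟫ + hⱼ} are the nearest power cells, and the pairwise intersections Vᵢ(h) ∩ Vⱼ(h), i ≠ j, are μ-null. Let T_h be any measurable map with T_h(x) = pᵢ for all x in Vᵢ(h) ∖ ⋃_{j≠i} Vⱼ(h). Then for every measurable map T taking values in {p₁, …, pₙ} with μ(T⁻¹{pᵢ}) = νᵢ for all i, we have ∫ ‖x − T_h(x)‖² dμ(x) ≤ ∫ ‖x − T(x)‖² dμ(x); i.e., T_h minimizes the quadratic transportation cost. -/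

import Mathlib

open MeasureTheory
open scoped RealInnerProductSpace

/-!
On the cell of `i` the index `i` maximises `⟪p j, x⟫ + h j`, i.e. minimises
`‖x - p j‖² - c (p j)` with `c (p j) = ‖p j‖² + 2 h j`. Since `Th` sends almost every point to
the centre of its cell, `‖x - Th x‖² - c (Th x) ≤ ‖x - T x‖² - c (T x)` almost everywhere, and
`∫ c ∘ S dμ = ∑ j, μ (S⁻¹{p j}) c (p j)` takes the same value for `S = T` and `S = Th`: both maps
give `p j` the mass `ν j`, for `Th` because the cells overlap only in null sets.
-/

/-- The nearest power cell of index `i` for points `p` and heights `h`. -/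
def nearCell {d n : ℕ} (p : Fin n → EuclideanSpace ℝ (Fin d)) (h : Fin n → ℝ) (i : Fin n) :
    Set (EuclideanSpace ℝ (Fin d)) :=
  {x | ∀ j, ⟪p j, x⟫ + h j ≤ ⟪p i, x⟫ + h i}

section FiniteRange

variable {α β ι : Type*} [MeasurableSpace α] [Fintype ι] {μ : Measure α} {p : ι → β} {S : α → β}

lemma comp_ae_eq_sum_indicator_preimage (hp : Function.Injective p)
    (hrange : ∀ᵐ x ∂μ, S x ∈ Set.range p) (F : β → ℝ) :
    (fun x => F (S x)) =ᵐ[μ] fun x => ∑ i, (S ⁻¹' {p i}).indicator (fun _ => F (p i)) x := by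
  filter_upwards [hrange] with x ⟨i, hi⟩
  rw [Finset.sum_eq_single i (fun j _ hji => ?_) (by simp)]
  · simp [hi]
  · simp [← hi, (hp.ne hji).symm]

lemma integrable_comp_of_measure_preimage_ne_top [MeasurableSpace β] [MeasurableSingletonClass β]
    (hp : Function.Injective p) (hS : Measurable S)
    (hrange : ∀ᵐ x ∂μ, S x ∈ Set.range p) (hfin : ∀ i, μ (S ⁻¹' {p i}) ≠ ⊤) (F : β → ℝ) :
    Integrable (fun x => F (S x)) μ := by
  refine (integrable_congr (comp_ae_eq_sum_indicator_preimage hp hrange F)).2 ?_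
  exact integrable_finsetSum _ fun i _ =>
    (integrableOn_const (hfin i)).integrable_indicator (hS (measurableSet_singleton _))

lemma integral_comp_eq_sum_measureReal [MeasurableSpace β] [MeasurableSingletonClass β]
    (hp : Function.Injective p) (hS : Measurable S)
    (hrange : ∀ᵐ x ∂μ, S x ∈ Set.range p) (hfin : ∀ i, μ (S ⁻¹' {p i}) ≠ ⊤) (F : β → ℝ) :
    ∫ x, F (S x) ∂μ = ∑ i, μ.real (S ⁻¹' {p i}) * F (p i) := by
  have hmeas i : MeasurableSet (S ⁻¹' {p i}) := hS (measurableSet_singleton _)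
  rw [integral_congr_ae (comp_ae_eq_sum_indicator_preimage hp hrange F),
    integral_finsetSum _ fun i _ => (integrableOn_const (hfin i)).integrable_indicator (hmeas i)]
  simp only [integral_indicator_const _ (hmeas _), smul_eq_mul]

end FiniteRange

lemma integrable_norm_sub_sq {α E : Type*} [MeasurableSpace α] [NormedAddCommGroup E]
    {μ : Measure α} {f g : α → E} (hf : AEStronglyMeasurable f μ) (hg : AEStronglyMeasurable g μ)
    (hf2 : Integrable (fun x => ‖f x‖ ^ 2) μ) (hg2 : Integrable (fun x => ‖g x‖ ^ 2) μ) :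
    Integrable (fun x => ‖f x - g x‖ ^ 2) μ :=
  (memLp_two_iff_integrable_sq_norm (hf.sub hg)).1 <|
    ((memLp_two_iff_integrable_sq_norm hf).2 hf2).sub ((memLp_two_iff_integrable_sq_norm hg).2 hg2)

section TransportCost

variable {E ι : Type*} [NormedAddCommGroup E] [MeasurableSpace E] [BorelSpace E]
  [SecondCountableTopology E] [Fintype ι] {μ : Measure E} {p : ι → E} {S : E → E}

lemma integrable_norm_sub_sq_sub_comp (hμ2 : Integrable (fun x => ‖x‖ ^ 2) μ)
    (hp : Function.Injective p) (hS : Measurable S) (hrange : ∀ᵐ x ∂μ, S x ∈ Set.range p)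
    (hfin : ∀ i, μ (S ⁻¹' {p i}) ≠ ⊤) (F : E → ℝ) :
    Integrable (fun x => ‖x - S x‖ ^ 2 - F (S x)) μ :=
  (integrable_norm_sub_sq aestronglyMeasurable_id hS.aestronglyMeasurable hμ2
    (integrable_comp_of_measure_preimage_ne_top hp hS hrange hfin fun y => ‖y‖ ^ 2)).sub
    (integrable_comp_of_measure_preimage_ne_top hp hS hrange hfin F)

lemma integral_norm_sub_sq_sub_comp (hμ2 : Integrable (fun x => ‖x‖ ^ 2) μ)
    (hp : Function.Injective p) (hS : Measurable S) (hrange : ∀ᵐ x ∂μ, S x ∈ Set.range p)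
    (hfin : ∀ i, μ (S ⁻¹' {p i}) ≠ ⊤) (F : E → ℝ) :
    ∫ x, ‖x - S x‖ ^ 2 - F (S x) ∂μ =
      ∫ x, ‖x - S x‖ ^ 2 ∂μ - ∑ i, μ.real (S ⁻¹' {p i}) * F (p i) := by
  rw [integral_sub _ (integrable_comp_of_measure_preimage_ne_top hp hS hrange hfin F),
    integral_comp_eq_sum_measureReal hp hS hrange hfin F]
  simpa using integrable_norm_sub_sq_sub_comp hμ2 hp hS hrange hfin 0

end TransportCost

section NearCell

variable {d n : ℕ} {p : Fin n → EuclideanSpace ℝ (Fin d)} {h : Fin n → ℝ}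

lemma exists_mem_nearCell [Nonempty (Fin n)] (p : Fin n → EuclideanSpace ℝ (Fin d))
    (h : Fin n → ℝ) (x : EuclideanSpace ℝ (Fin d)) : ∃ i, x ∈ nearCell p h i :=
  Finite.exists_max fun i => ⟪p i, x⟫ + h i

lemma norm_sub_sq_sub_le_of_mem_nearCell {x : EuclideanSpace ℝ (Fin d)} {i : Fin n}
    (hx : x ∈ nearCell p h i) (j : Fin n) :
    ‖x - p i‖ ^ 2 - ‖p i‖ ^ 2 - 2 * h i ≤ ‖x - p j‖ ^ 2 - ‖p j‖ ^ 2 - 2 * h j := by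
  rw [norm_sub_sq_real, norm_sub_sq_real, real_inner_comm (p i) x, real_inner_comm (p j) x]
  linarith [hx j]

variable {μ : Measure (EuclideanSpace ℝ (Fin d))}
  {Th : EuclideanSpace ℝ (Fin d) → EuclideanSpace ℝ (Fin d)}

lemma ae_forall_mem_nearCell_imp_eq
    (hnull : ∀ i j, i ≠ j → μ (nearCell p h i ∩ nearCell p h j) = 0)
    (hTh : ∀ i, ∀ x ∈ nearCell p h i \ ⋃ j ∈ ({i}ᶜ : Set (Fin n)), nearCell p h j, Th x = p i) :
    ∀ᵐ x ∂μ, ∀ i, x ∈ nearCell p h i → Th x = p i := by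
  have hdisj : ∀ᵐ x ∂μ, ∀ i j, i ≠ j → x ∉ nearCell p h i ∩ nearCell p h j := by
    refine ae_all_iff.2 fun i => ae_all_iff.2 fun j => ?_
    by_cases hij : i = j
    · exact ae_of_all _ fun _ hne => absurd hij hne
    · filter_upwards [measure_eq_zero_iff_ae_notMem.1 (hnull i j hij)] with x hx _ using hx
  filter_upwards [hdisj] with x hx i hxi
  refine hTh i x ⟨hxi, ?_⟩
  simp only [Set.mem_iUnion, Set.mem_compl_singleton_iff, not_exists]
  exact fun j hji hxj => hx i j hji.symm ⟨hxi, hxj⟩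

lemma measure_preimage_eq_nearCell [Nonempty (Fin n)] (hp : Function.Injective p)
    (hTh : ∀ᵐ x ∂μ, ∀ i, x ∈ nearCell p h i → Th x = p i) (i : Fin n) :
    μ (Th ⁻¹' {p i}) = μ (nearCell p h i) := by
  refine measure_congr (Filter.eventuallyEq_set.2 ?_)
  filter_upwards [hTh] with x hx
  obtain ⟨j, hj⟩ := exists_mem_nearCell p h x
  simp only [Set.mem_preimage, Set.mem_singleton_iff, hx j hj, hp.eq_iff]
  exact ⟨fun hji => hji ▸ hj, fun hi => hp ((hx j hj).symm.trans (hx i hi))⟩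

lemma ae_mem_range_of_forall_mem_nearCell_imp_eq [Nonempty (Fin n)]
    (hTh : ∀ᵐ x ∂μ, ∀ i, x ∈ nearCell p h i → Th x = p i) : ∀ᵐ x ∂μ, Th x ∈ Set.range p := by
  filter_upwards [hTh] with x hx
  obtain ⟨i, hi⟩ := exists_mem_nearCell p h x
  exact ⟨i, (hx i hi).symm⟩

end NearCell

theorem stmt_13_general {d n : ℕ}
    (μ : Measure (EuclideanSpace ℝ (Fin d)))
    (hμ2 : Integrable (fun x => ‖x‖ ^ 2) μ)
    (p : Fin n → EuclideanSpace ℝ (Fin d)) (hp : Function.Injective p)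
    (ν : Fin n → ℝ)
    (h : Fin n → ℝ)
    (hvol : ∀ i, μ (nearCell p h i) = ENNReal.ofReal (ν i))
    (hnull : ∀ i j, i ≠ j → μ (nearCell p h i ∩ nearCell p h j) = 0)
    (Th : EuclideanSpace ℝ (Fin d) → EuclideanSpace ℝ (Fin d))
    (hThm : Measurable Th)
    (hTh : ∀ i, ∀ x ∈ nearCell p h i \ ⋃ j ∈ ({i}ᶜ : Set (Fin n)), nearCell p h j, Th x = p i) :
    ∀ T : EuclideanSpace ℝ (Fin d) → EuclideanSpace ℝ (Fin d),
      Measurable T → (∀ x, ∃ i, T x = p i) →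
      (∀ i, μ (T ⁻¹' {p i}) = ENNReal.ofReal (ν i)) →
      ∫ x, ‖x - Th x‖ ^ 2 ∂μ ≤ ∫ x, ‖x - T x‖ ^ 2 ∂μ := by
  intro T hTm hTval hTpre
  have : Nonempty (Fin n) := ⟨(hTval 0).choose⟩
  have hThcell := ae_forall_mem_nearCell_imp_eq hnull hTh
  have hThpre i : μ (Th ⁻¹' {p i}) = ENNReal.ofReal (ν i) :=
    (measure_preimage_eq_nearCell hp hThcell i).trans (hvol i)
  have hThrange := ae_mem_range_of_forall_mem_nearCell_imp_eq hThcell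
  have hTrange : ∀ᵐ x ∂μ, T x ∈ Set.range p := ae_of_all _ fun x => (hTval x).imp fun _ => Eq.symm
  let c : EuclideanSpace ℝ (Fin d) → ℝ := fun y => ‖y‖ ^ 2 + 2 * Function.extend p h 0 y
  have hc i : c (p i) = ‖p i‖ ^ 2 + 2 * h i := by simp only [c, hp.extend_apply]
  have key : ∀ᵐ x ∂μ, ‖x - Th x‖ ^ 2 - c (Th x) ≤ ‖x - T x‖ ^ 2 - c (T x) := by
    filter_upwards [hThcell] with x hx
    obtain ⟨i, hi⟩ := exists_mem_nearCell p h x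
    obtain ⟨j, hj⟩ := hTval x
    rw [hx i hi, hj, hc, hc]
    linarith [norm_sub_sq_sub_le_of_mem_nearCell hi j]
  have hfin {S : EuclideanSpace ℝ (Fin d) → EuclideanSpace ℝ (Fin d)}
      (hpre : ∀ i, μ (S ⁻¹' {p i}) = ENNReal.ofReal (ν i)) i : μ (S ⁻¹' {p i}) ≠ ⊤ := by
    simp [hpre]
  have hmass i : μ.real (Th ⁻¹' {p i}) = μ.real (T ⁻¹' {p i}) := by
    simp only [measureReal_def, hThpre, hTpre]
  have hmono := integral_mono_ae
    (integrable_norm_sub_sq_sub_comp hμ2 hp hThm hThrange (hfin hThpre) c)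
    (integrable_norm_sub_sq_sub_comp hμ2 hp hTm hTrange (hfin hTpre) c) key
  rw [integral_norm_sub_sq_sub_comp hμ2 hp hThm hThrange (hfin hThpre),
    integral_norm_sub_sq_sub_comp hμ2 hp hTm hTrange (hfin hTpre)] at hmono
  simp only [hmass] at hmono
  linarith

theorem stmt_13 {d n : ℕ}
    (μ : Measure (EuclideanSpace ℝ (Fin d))) [IsFiniteMeasure μ]
    (hμ2 : Integrable (fun x => ‖x‖ ^ 2) μ)
    (p : Fin n → EuclideanSpace ℝ (Fin d)) (hp : Function.Injective p)
    (ν : Fin n → ℝ) (hν : ∀ i, 0 < ν i)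
    (hmass : ∑ i, ν i = (μ Set.univ).toReal)
    (h : Fin n → ℝ)
    (hvol : ∀ i, μ (nearCell p h i) = ENNReal.ofReal (ν i))
    (hnull : ∀ i j, i ≠ j → μ (nearCell p h i ∩ nearCell p h j) = 0)
    (Th : EuclideanSpace ℝ (Fin d) → EuclideanSpace ℝ (Fin d))
    (hThm : Measurable Th)
    (hTh : ∀ i, ∀ x ∈ nearCell p h i \ ⋃ j ∈ ({i}ᶜ : Set (Fin n)), nearCell p h j, Th x = p i) :
    ∀ T : EuclideanSpace ℝ (Fin d) → EuclideanSpace ℝ (Fin d),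
      Measurable T → (∀ x, ∃ i, T x = p i) →
      (∀ i, μ (T ⁻¹' {p i}) = ENNReal.ofReal (ν i)) →
      ∫ x, ‖x - Th x‖ ^ 2 ∂μ ≤ ∫ x, ‖x - T x‖ ^ 2 ∂μ :=
  stmt_13_general μ hμ2 p hp ν h hvol hnull Th hThm hTh
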